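/- Let Y, V ⊆ ℝ^d be polyhedral convex cones. Then there exists C > 0 such that C · dist(x, Y) ≥ dist(x, Y ∩ V) for all x ∈ V. -/

import Mathlib

open scoped RealInnerProductSpace
open Finset

variable {H : Type*} [NormedAddCommGroup H] [InnerProductSpace ℝ H]
variable {ι : Type*} [Fintype ι] [DecidableEq ι]

/-- Carathéodory-type support reduction for conical combinations. -/
lemma cone_cara (a : ι → H) :
    ∀ (N : ℕ) (l : ι → ℝ), (Finset.univ.filter fun i => l i ≠ 0).card ≤ N → (∀ i, 0 ≤ l i) →
    ∃ l' : ι → ℝ, (∀ i, 0 ≤ l' i) ∧ (∀ i, l' i ≠ 0 → l i ≠ 0) ∧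
      (∑ i, l' i • a i = ∑ i, l i • a i) ∧
      LinearIndependent ℝ (fun i : {i // l' i ≠ 0} => a i) := by
  intro N
  induction N with
  | zero =>
    intro l hcard hl
    have hempty : (Finset.univ.filter fun i => l i ≠ 0) = ∅ :=
      Finset.card_eq_zero.1 (Nat.le_zero.1 hcard)
    have hall : ∀ i, l i = 0 := by
      intro i
      by_contra h
      have : i ∈ (Finset.univ.filter fun i => l i ≠ 0) := by simp [h]
      simp [hempty] at this
    have : IsEmpty {i // l i ≠ 0} := ⟨fun ⟨i, hi⟩ => hi (hall i)⟩
    exact ⟨l, hl, fun i h => h, rfl, linearIndependent_empty_type⟩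
  | succ N ih =>
    intro l hcard hl
    by_cases hind : LinearIndependent ℝ (fun i : {i // l i ≠ 0} => a i)
    · exact ⟨l, hl, fun i h => h, rfl, hind⟩
    · obtain ⟨g, hg0, i₀, hgi₀⟩ := Fintype.not_linearIndependent_iff.1 hind
      -- extend g by zero to a dependency relation supported in the support of l
      have key : ∀ g' : ι → ℝ, (∀ i, g' i ≠ 0 → l i ≠ 0) → (∑ i, g' i • a i = 0) →
          (∃ i, 0 < g' i) →
          ∃ l' : ι → ℝ, (∀ i, 0 ≤ l' i) ∧ (∀ i, l' i ≠ 0 → l i ≠ 0) ∧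
            (∑ i, l' i • a i = ∑ i, l i • a i) ∧
            LinearIndependent ℝ (fun i : {i // l' i ≠ 0} => a i) := by
        intro g' hg'supp hg'sum ⟨i₁, hi₁⟩
        set S : Finset ι := Finset.univ.filter fun i => 0 < g' i with hS
        have hSne : S.Nonempty := ⟨i₁, by simp [hS, hi₁]⟩
        set t : ℝ := S.inf' hSne fun i => l i / g' i with ht
        have ht0 : 0 ≤ t := by
          rw [ht, Finset.le_inf'_iff]
          intro b hb
          rw [hS, Finset.mem_filter] at hb
          exact div_nonneg (hl b) (le_of_lt hb.2)
        set l₂ : ι → ℝ := fun i => l i - t * g' i with hl₂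
        have hl₂0 : ∀ i, 0 ≤ l₂ i := by
          intro i
          rw [hl₂]
          by_cases hgi : 0 < g' i
          · have : t ≤ l i / g' i := Finset.inf'_le _ (by simp [hS, hgi])
            have := (le_div_iff₀ hgi).1 this
            simpa using this
          · push_neg at hgi
            have : t * g' i ≤ 0 := mul_nonpos_of_nonneg_of_nonpos ht0 hgi
            dsimp; linarith [hl i]
        have hl₂supp : ∀ i, l₂ i ≠ 0 → l i ≠ 0 := by
          intro i h
          by_contra hli
          have : g' i = 0 := by by_contra hgi; exact hg'supp i hgi hli
          simp [hl₂, hli, this] at h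
        have hl₂sum : ∑ i, l₂ i • a i = ∑ i, l i • a i := by
          simp only [hl₂, sub_smul, mul_smul, Finset.sum_sub_distrib, ← Finset.smul_sum, hg'sum,
            smul_zero, sub_zero]
        -- the support strictly decreased
        obtain ⟨j, hjS, hjt⟩ := Finset.exists_mem_eq_inf' hSne fun i => l i / g' i
        have hgj : 0 < g' j := by rw [hS, Finset.mem_filter] at hjS; exact hjS.2
        have hlj : l j ≠ 0 := hg'supp j (ne_of_gt hgj)
        have hl₂j : l₂ j = 0 := by
          have htj : t = l j / g' j := by rw [ht]; exact hjt
          simp only [hl₂, htj, div_mul_cancel₀ _ (ne_of_gt hgj), sub_self]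
        have hsubset : (Finset.univ.filter fun i => l₂ i ≠ 0) ⊆
            (Finset.univ.filter fun i => l i ≠ 0).erase j := by
          intro i hi
          rw [Finset.mem_filter] at hi
          rw [Finset.mem_erase, Finset.mem_filter]
          refine ⟨?_, Finset.mem_univ i, hl₂supp i hi.2⟩
          rintro rfl
          exact hi.2 hl₂j
        have hcard₂ : (Finset.univ.filter fun i => l₂ i ≠ 0).card ≤ N := by
          have h1 := Finset.card_le_card hsubset
          have h2 : ((Finset.univ.filter fun i => l i ≠ 0).erase j).card
              = (Finset.univ.filter fun i => l i ≠ 0).card - 1 :=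
            Finset.card_erase_of_mem (Finset.mem_filter.2 ⟨Finset.mem_univ j, hlj⟩)
          have h3 : 1 ≤ (Finset.univ.filter fun i => l i ≠ 0).card :=
            Finset.card_pos.2 ⟨j, Finset.mem_filter.2 ⟨Finset.mem_univ j, hlj⟩⟩
          omega
        obtain ⟨l', h1, h2, h3, h4⟩ := ih l₂ hcard₂ hl₂0
        exact ⟨l', h1, fun i hi => hl₂supp i (h2 i hi), h3.trans hl₂sum, h4⟩
      set g' : ι → ℝ := fun i => if h : l i ≠ 0 then g ⟨i, h⟩ else 0 with hg'
      have hg'supp : ∀ i, g' i ≠ 0 → l i ≠ 0 := by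
        intro i h
        by_contra hli
        simp [hg', hli] at h
      have hg'sum : ∑ i, g' i • a i = 0 := by
        calc ∑ i, g' i • a i
            = ∑ i ∈ Finset.univ.filter (fun i => l i ≠ 0), g' i • a i := by
              refine (Finset.sum_filter_of_ne ?_).symm
              intro i _ h
              by_contra hli
              simp [hg', hli] at h
          _ = ∑ i : {i // l i ≠ 0}, g' i • a i := Finset.sum_subtype _ (by simp) _
          _ = ∑ i : {i // l i ≠ 0}, g i • a i := by
              refine Finset.sum_congr rfl fun i _ => ?_
              simp [hg', i.2]
          _ = 0 := hg0
      have hg'i₀ : g' (i₀ : ι) ≠ 0 := by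
        have : g' (i₀ : ι) = g i₀ := by simp [hg', i₀.2]
        rw [this]; exact hgi₀
      rcases lt_or_gt_of_ne hg'i₀ with hneg | hpos
      · refine key (fun i => -g' i) (fun i h => hg'supp i (by simpa using h)) ?_ ⟨i₀, by show 0 < -g' ↑i₀; linarith⟩
        simp only [neg_smul, Finset.sum_neg_distrib, hg'sum, neg_zero]
      · exact key g' hg'supp hg'sum ⟨i₀, hpos⟩




lemma indep_bound (a : ι → H) (s : Finset ι)
    (hs : LinearIndependent ℝ (fun i : ↥s => a i)) :
    ∃ c > 0, ∀ l : ι → ℝ, (∀ i, i ∉ s → l i = 0) →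
      ∑ i, |l i| ≤ c * ‖∑ i, l i • a i‖ := by
  classical
  set f : (↥s → ℝ) →ₗ[ℝ] H := Fintype.linearCombination ℝ (fun i : ↥s => a i) with hf
  have hfapp : ∀ x : ↥s → ℝ, f x = ∑ i : ↥s, x i • a i :=
    fun x => rfl
  have hinj : Function.Injective f := by
    rw [← LinearMap.ker_eq_bot]
    rw [Submodule.eq_bot_iff]
    intro x hx
    rw [LinearMap.mem_ker, hfapp] at hx
    funext i
    exact Fintype.linearIndependent_iff.1 hs x hx i
  set e : (↥s → ℝ) ≃ₗ[ℝ] LinearMap.range f := LinearEquiv.ofInjective f hinj with he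
  set ce := e.toContinuousLinearEquiv with hce
  set C : ℝ := ‖(ce.symm : LinearMap.range f →L[ℝ] (↥s → ℝ))‖ with hC
  have hnorm : ∀ x : ↥s → ℝ, ‖x‖ ≤ C * ‖f x‖ := by
    intro x
    have h1 : ce.symm (ce x) = x := ce.symm_apply_apply x
    have h2 : ‖ce.symm (ce x)‖ ≤ C * ‖ce x‖ :=
      ContinuousLinearMap.le_opNorm (ce.symm : LinearMap.range f →L[ℝ] (↥s → ℝ)) (ce x)
    have h3 : ‖ce x‖ = ‖f x‖ := by
      have : ((ce x : LinearMap.range f) : H) = f x := by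
        rw [hce]
        rw [show (e.toContinuousLinearEquiv x) = e x from rfl]
        rw [he]
        exact LinearEquiv.ofInjective_apply f x
      rw [← this]
      rfl
    rw [h1, h3] at h2
    exact h2
  have hCnn : (0:ℝ) ≤ C := by rw [hC]; exact norm_nonneg ((ce.symm : LinearMap.range f →L[ℝ] (↥s → ℝ)))
  have hCpos : (0:ℝ) ≤ (s.card : ℝ) * C := mul_nonneg (Nat.cast_nonneg _) hCnn
  refine ⟨(s.card : ℝ) * C + 1, by linarith, fun l hsupp => ?_⟩
  set l₀ : ↥s → ℝ := fun i => l i with hl₀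
  have hsum : ∑ i, l i • a i = f l₀ := by
    rw [hfapp]
    rw [show ∑ i : ↥s, l₀ i • a ↑i = ∑ i ∈ s, l i • a i from Finset.sum_coe_sort s (fun i => l i • a i)]
    exact (Finset.sum_subset (Finset.subset_univ s) (fun j _ hj => by rw [hsupp j hj, zero_smul])).symm
  have habs : ∑ i, |l i| = ∑ i : ↥s, |l₀ i| := by
    rw [show ∑ i : ↥s, |l₀ i| = ∑ i ∈ s, |l i| from Finset.sum_coe_sort s (fun i => |l i|)]
    exact (Finset.sum_subset (Finset.subset_univ s) (fun j _ hj => by rw [hsupp j hj, abs_zero])).symm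
  have hbd : ∑ i : ↥s, |l₀ i| ≤ (s.card : ℝ) * ‖l₀‖ := by
    have : ∀ i : ↥s, |l₀ i| ≤ ‖l₀‖ := fun i => by
      simpa [Real.norm_eq_abs] using norm_le_pi_norm l₀ i
    calc ∑ i : ↥s, |l₀ i| ≤ ∑ _i : ↥s, ‖l₀‖ := Finset.sum_le_sum (fun i _ => this i)
      _ = (s.card : ℝ) * ‖l₀‖ := by simp [mul_comm]
  have := hnorm l₀
  have hfl₀ : (0:ℝ) ≤ ‖f l₀‖ := norm_nonneg _
  calc ∑ i, |l i| = ∑ i : ↥s, |l₀ i| := habs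
    _ ≤ (s.card : ℝ) * ‖l₀‖ := hbd
    _ ≤ (s.card : ℝ) * (C * ‖f l₀‖) := by
        exact mul_le_mul_of_nonneg_left (hnorm l₀) (Nat.cast_nonneg _)
    _ = ((s.card : ℝ) * C) * ‖f l₀‖ := by ring
    _ ≤ ((s.card : ℝ) * C + 1) * ‖f l₀‖ := mul_le_mul_of_nonneg_right (by linarith) hfl₀
    _ = ((s.card : ℝ) * C + 1) * ‖∑ i, l i • a i‖ := by rw [hsum]

set_option linter.unusedSectionVars false

lemma cone_boundRep (a : ι → H) :
    ∃ M > (0:ℝ), ∀ l : ι → ℝ, (∀ i, 0 ≤ l i) →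
      ∃ l' : ι → ℝ, (∀ i, 0 ≤ l' i) ∧ (∀ i, l' i ≠ 0 → l i ≠ 0) ∧
        (∑ i, l' i • a i = ∑ i, l i • a i) ∧ ∑ i, l' i ≤ M * ‖∑ i, l i • a i‖ := by
  classical
  have hc : ∀ s : Finset ι, ∃ c, 0 < c ∧ (LinearIndependent ℝ (fun i : ↥s => a i) →
      ∀ l : ι → ℝ, (∀ i, i ∉ s → l i = 0) → ∑ i, |l i| ≤ c * ‖∑ i, l i • a i‖) := by
    intro s
    by_cases hs : LinearIndependent ℝ (fun i : ↥s => a i)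
    · obtain ⟨c, hc0, hcb⟩ := indep_bound a s hs
      exact ⟨c, hc0, fun _ => hcb⟩
    · exact ⟨1, one_pos, fun h => absurd h hs⟩
  choose c hc0 hcb using hc
  set M : ℝ := 1 + ∑ s : Finset ι, c s with hM
  have hMge : ∀ s : Finset ι, c s ≤ M := by
    intro s
    have h1 : c s ≤ ∑ t : Finset ι, c t :=
      Finset.single_le_sum (fun t _ => le_of_lt (hc0 t)) (Finset.mem_univ s)
    linarith
  have hMpos : 0 < M := by
    have : 0 ≤ ∑ t : Finset ι, c t := Finset.sum_nonneg fun t _ => le_of_lt (hc0 t)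
    linarith
  refine ⟨M, hMpos, fun l hl => ?_⟩
  obtain ⟨l', h1, h2, h3, h4⟩ := cone_cara a _ l le_rfl hl
  set s : Finset ι := Finset.univ.filter fun i => l' i ≠ 0 with hs
  have hind : LinearIndependent ℝ (fun i : ↥s => a i) :=
    (linearIndependent_equiv' (Equiv.subtypeEquivRight (fun i => by simp [hs])) rfl).1 h4
  have hsupp : ∀ i, i ∉ s → l' i = 0 := fun i hi => by
    by_contra h; exact hi (Finset.mem_filter.2 ⟨Finset.mem_univ i, h⟩)
  refine ⟨l', h1, h2, h3, ?_⟩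
  calc ∑ i, l' i = ∑ i, |l' i| :=
        Finset.sum_congr rfl fun i _ => (abs_of_nonneg (h1 i)).symm
    _ ≤ c s * ‖∑ i, l' i • a i‖ := hcb s hind l' hsupp
    _ = c s * ‖∑ i, l i • a i‖ := by rw [h3]
    _ ≤ M * ‖∑ i, l i • a i‖ := mul_le_mul_of_nonneg_right (hMge s) (norm_nonneg _)

lemma cone_isClosed (a : ι → H) :
    IsClosed {x : H | ∃ l : ι → ℝ, (∀ i, 0 ≤ l i) ∧ x = ∑ i, l i • a i} := by
  classical
  obtain ⟨M, hM, hrep⟩ := cone_boundRep a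
  have hcont : Continuous fun l : ι → ℝ => ∑ i, l i • a i :=
    continuous_finset_sum _ fun i _ => (continuous_apply i).smul continuous_const
  rw [← isSeqClosed_iff_isClosed]
  intro u x hu hux
  have hbdd : ∃ R : ℝ, (0 ≤ R) ∧ ∀ n, ‖u n‖ ≤ R := by
    obtain ⟨R, hR⟩ := (hux.norm).bddAbove_range
    exact ⟨R, le_trans (norm_nonneg _) (hR (Set.mem_range_self 0)),
      fun n => hR (Set.mem_range_self n)⟩
  obtain ⟨R, hRnn, hR⟩ := hbdd
  have hrepn : ∀ n, ∃ l : ι → ℝ, (∀ i, 0 ≤ l i) ∧ u n = ∑ i, l i • a i ∧ ∑ i, l i ≤ M * R := by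
    intro n
    obtain ⟨l, hl, hsum⟩ := hu n
    obtain ⟨l', h1, _, h3, h4⟩ := hrep l hl
    refine ⟨l', h1, by rw [hsum, h3], ?_⟩
    calc ∑ i, l' i ≤ M * ‖∑ i, l i • a i‖ := h4
      _ = M * ‖u n‖ := by rw [hsum]
      _ ≤ M * R := mul_le_mul_of_nonneg_left (hR n) (le_of_lt hM)
  choose p hp1 hp2 hp3 using hrepn
  set T := {l : ι → ℝ | (∀ i, 0 ≤ l i) ∧ ∑ i, l i ≤ M * R} with hT
  have hTeq : T = (⋂ i, {l : ι → ℝ | 0 ≤ l i}) ∩ {l : ι → ℝ | ∑ i, l i ≤ M * R} := by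
    ext l; simp [hT, Set.mem_iInter, Set.mem_setOf_eq]
  have hTclosed : IsClosed T := by
    rw [hTeq]
    exact IsClosed.inter
      (isClosed_iInter fun i => isClosed_le continuous_const (continuous_apply i))
      (isClosed_le (continuous_finset_sum _ fun i _ => continuous_apply i) continuous_const)
  have hTbdd : Bornology.IsBounded T := by
    refine (Metric.isBounded_closedBall (x := (0 : ι → ℝ)) (r := M * R)).subset ?_
    intro l hl
    rw [Metric.mem_closedBall, dist_zero_right]
    rw [pi_norm_le_iff_of_nonneg (mul_nonneg (le_of_lt hM) hRnn)]
    intro i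
    rw [Real.norm_eq_abs, abs_of_nonneg (hl.1 i)]
    exact le_trans (Finset.single_le_sum (fun j _ => hl.1 j) (Finset.mem_univ i)) hl.2
  have hTcompact : IsCompact T := Metric.isCompact_of_isClosed_isBounded hTclosed hTbdd
  have hpT : ∀ n, p n ∈ T := fun n => ⟨hp1 n, hp3 n⟩
  obtain ⟨l, hlT, φ, hφmono, hφ⟩ := hTcompact.tendsto_subseq hpT
  have h5 : Filter.Tendsto (fun k => u (φ k)) Filter.atTop (nhds x) :=
    hux.comp hφmono.tendsto_atTop
  have h6 : Filter.Tendsto (fun k => u (φ k)) Filter.atTop (nhds (∑ i, l i • a i)) := by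
    have := (hcont.tendsto l).comp hφ
    convert this using 2 with k
    exact hp2 (φ k)
  exact ⟨l, hlT.1, tendsto_nhds_unique h5 h6⟩

lemma cone_farkas [CompleteSpace H] (a : ι → H) (b : H)
    (hb : ∀ y, (∀ i, ⟪a i, y⟫ ≤ 0) → ⟪b, y⟫ ≤ 0) :
    ∃ l : ι → ℝ, (∀ i, 0 ≤ l i) ∧ b = ∑ i, l i • a i := by
  classical
  by_contra hcon
  push_neg at hcon
  set K : ConvexCone ℝ H :=
    { carrier := {x : H | ∃ l : ι → ℝ, (∀ i, 0 ≤ l i) ∧ x = ∑ i, l i • a i}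
      smul_mem' := by
        rintro c hc x ⟨l, hl, rfl⟩
        exact ⟨fun i => c * l i, fun i => mul_nonneg (le_of_lt hc) (hl i), by
          rw [Finset.smul_sum]
          exact Finset.sum_congr rfl fun i _ => by dsimp; rw [smul_smul]⟩
      add_mem' := by
        rintro x ⟨l₁, hl₁, rfl⟩ y ⟨l₂, hl₂, rfl⟩
        exact ⟨fun i => l₁ i + l₂ i, fun i => add_nonneg (hl₁ i) (hl₂ i), by
          rw [← Finset.sum_add_distrib]
          exact Finset.sum_congr rfl fun i _ => by dsimp; rw [add_smul]⟩ } with hK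
  have hbS : b ∉ (K : Set H) := by
    rintro ⟨l, hl, hsum⟩
    exact hcon l hl hsum
  have hKne : (K : Set H).Nonempty := ⟨0, ⟨fun _ => 0, fun i => le_rfl, by simp⟩⟩
  have hKclosed : IsClosed (K : Set H) := cone_isClosed a
  obtain ⟨y, hy1, hy2⟩ :=
    show ∃ y, (∀ x ∈ K, 0 ≤ ⟪x, y⟫) ∧ ⟪y, b⟫ < 0 by
      let C' : ProperCone ℝ H :=
        { carrier := (K : Set H)
          zero_mem' := ⟨fun _ => 0, fun _ => le_rfl, by simp⟩
          add_mem' := fun ha hb => K.add_mem ha hb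
          smul_mem' := fun c x hx => by
            rcases eq_or_lt_of_le c.2 with hc | hc
            · have : c = 0 := NNReal.coe_eq_zero.1 hc.symm
              subst this
              rw [zero_smul]
              exact ⟨fun _ => 0, fun _ => le_rfl, by simp⟩
            · exact K.smul_mem hc hx
          isClosed' := hKclosed }
      obtain ⟨y, h1, h2⟩ := ProperCone.hyperplane_separation' C' (x₀ := b) hbS
      exact ⟨y, fun x hx => h1 x hx, by rw [real_inner_comm]; exact h2⟩
  have hai : ∀ i, ⟪a i, -y⟫ ≤ 0 := by
    intro i
    have hmem : a i ∈ K := by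
      refine ⟨fun j => if j = i then 1 else 0, fun j => by dsimp; split <;> norm_num, ?_⟩
      simp [ite_smul]
    have := hy1 (a i) hmem
    rw [inner_neg_right]
    linarith
  have h1 : ⟪b, -y⟫ ≤ 0 := hb (-y) hai
  rw [inner_neg_right] at h1
  rw [real_inner_comm] at hy2
  linarith

/-- A polyhedral convex cone: a finite intersection of closed half-spaces through the origin. -/
def IsPolyhedralCone {d : ℕ} (Q : Set (EuclideanSpace ℝ (Fin d))) : Prop :=
  ∃ (n : ℕ) (v : Fin n → EuclideanSpace ℝ (Fin d)),
    Q = {x | ∀ j, ⟪v j, x⟫ ≤ 0}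

theorem stmt_13 {d : ℕ} (Y V : Set (EuclideanSpace ℝ (Fin d)))
    (hY : IsPolyhedralCone Y) (hV : IsPolyhedralCone V) :
    ∃ C > (0 : ℝ), ∀ x ∈ V, Metric.infDist x (Y ∩ V) ≤ C * Metric.infDist x Y := by
  classical
  obtain ⟨n, u, rfl⟩ := hY
  obtain ⟨m, w, rfl⟩ := hV
  set c : Sum (Fin n) (Fin m) → EuclideanSpace ℝ (Fin d) := Sum.elim u w with hc
  set P := {x : EuclideanSpace ℝ (Fin d) | ∀ j, ⟪c j, x⟫ ≤ 0} with hP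
  have hPeq : ({x | ∀ j, ⟪u j, x⟫ ≤ 0} ∩ {x | ∀ j, ⟪w j, x⟫ ≤ 0} :
      Set (EuclideanSpace ℝ (Fin d))) = P := by
    ext x
    constructor
    · rintro ⟨h1, h2⟩ j
      cases j with
      | inl i => exact h1 i
      | inr k => exact h2 k
    · intro h
      exact ⟨fun i => h (Sum.inl i), fun k => h (Sum.inr k)⟩
  have h0P : (0 : EuclideanSpace ℝ (Fin d)) ∈ P := fun j => by rw [inner_zero_right]
  have hPconv : Convex ℝ P := by
    have hPI : P = ⋂ j, {x : EuclideanSpace ℝ (Fin d) | ⟪c j, x⟫ ≤ 0} := by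
      ext x; simp [hP, Set.mem_iInter]
    rw [hPI]
    exact convex_iInter fun j => convex_halfSpace_le
      ⟨fun a b => inner_add_right _ _ _, fun r a => real_inner_smul_right _ _ _⟩ 0
  have hPclosed : IsClosed P := by
    have hPI : P = ⋂ j, (fun x : EuclideanSpace ℝ (Fin d) => ⟪c j, x⟫) ⁻¹' Set.Iic 0 := by
      ext x; simp [hP, Set.mem_iInter, Set.mem_preimage, Set.mem_Iic]
    rw [hPI]
    exact isClosed_iInter fun j =>
      IsClosed.preimage (Continuous.inner continuous_const continuous_id) isClosed_Iic
  obtain ⟨M, hM, hrep⟩ := cone_boundRep c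
  set N : ℝ := 1 + ∑ i, ‖u i‖ with hN
  have hNpos : 0 < N := by
    have : (0:ℝ) ≤ ∑ i, ‖u i‖ := Finset.sum_nonneg fun i _ => norm_nonneg _
    rw [hN]; linarith
  have hNge : ∀ i, ‖u i‖ ≤ N := by
    intro i
    have := Finset.single_le_sum (fun j (_ : j ∈ Finset.univ) => norm_nonneg (u j))
      (Finset.mem_univ i)
    rw [hN]; linarith
  refine ⟨M * N, mul_pos hM hNpos, ?_⟩
  intro x hxV
  rw [hPeq]
  set δ := Metric.infDist x {x : EuclideanSpace ℝ (Fin d) | ∀ j, ⟪u j, x⟫ ≤ 0} with hδ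
  have hδnn : 0 ≤ δ := Metric.infDist_nonneg
  have h0Y : (0 : EuclideanSpace ℝ (Fin d)) ∈
      {x : EuclideanSpace ℝ (Fin d) | ∀ j, ⟪u j, x⟫ ≤ 0} := fun j => by rw [inner_zero_right]
  have hinY : ∀ i, ⟪u i, x⟫ ≤ ‖u i‖ * δ := by
    intro i
    rcases eq_or_ne (u i) 0 with h0 | h0
    · simp [h0, inner_zero_left]
    · have hupos : 0 < ‖u i‖ := norm_pos_iff.2 h0
      have hkey : ∀ y : {x : EuclideanSpace ℝ (Fin d) | ∀ j, ⟪u j, x⟫ ≤ 0},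
          ⟪u i, x⟫ / ‖u i‖ ≤ dist x (y : EuclideanSpace ℝ (Fin d)) := by
        rintro ⟨y, hy⟩
        have h1 : ⟪u i, x⟫ = ⟪u i, x - y⟫ + ⟪u i, y⟫ := by rw [inner_sub_right]; ring
        have h2 : ⟪u i, x - y⟫ ≤ ‖u i‖ * ‖x - y‖ := real_inner_le_norm _ _
        have h3 : ⟪u i, y⟫ ≤ 0 := hy i
        rw [dist_eq_norm, div_le_iff₀ hupos]
        calc ⟪u i, x⟫ ≤ ‖u i‖ * ‖x - y‖ := by linarith
          _ = ‖x - y‖ * ‖u i‖ := mul_comm _ _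
      haveI : Nonempty ({x : EuclideanSpace ℝ (Fin d) | ∀ j, ⟪u j, x⟫ ≤ 0}) :=
        ⟨⟨0, h0Y⟩⟩
      have hle : ⟪u i, x⟫ / ‖u i‖ ≤ δ := by
        rw [hδ, Metric.infDist_eq_iInf]
        exact le_ciInf hkey
      calc ⟪u i, x⟫ = (⟪u i, x⟫ / ‖u i‖) * ‖u i‖ := by field_simp
        _ ≤ δ * ‖u i‖ := mul_le_mul_of_nonneg_right hle (le_of_lt hupos)
        _ = ‖u i‖ * δ := mul_comm _ _
  obtain ⟨p, hpP, hproj⟩ :=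
    exists_norm_eq_iInf_of_complete_convex ⟨0, h0P⟩ hPclosed.isComplete hPconv x
  have hvar : ∀ z ∈ P, ⟪x - p, z - p⟫ ≤ 0 :=
    (norm_eq_iInf_iff_real_inner_le_zero hPconv hpP).1 hproj
  have hdistP : Metric.infDist x P = ‖x - p‖ := by
    rw [Metric.infDist_eq_iInf]
    simp_rw [dist_eq_norm]
    exact hproj.symm
  set A : Finset (Sum (Fin n) (Fin m)) := Finset.univ.filter fun j => ⟪c j, p⟫ = 0 with hA
  have hnormal : ∀ y : EuclideanSpace ℝ (Fin d),
      (∀ j : ↥A, ⟪c (j : Sum (Fin n) (Fin m)), y⟫ ≤ 0) → ⟪x - p, y⟫ ≤ 0 := by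
    intro y hy
    set B : Finset (Sum (Fin n) (Fin m)) := Finset.univ.filter fun j => ⟪c j, p⟫ < 0 with hB
    set f : Sum (Fin n) (Fin m) → ℝ := fun j => (-⟪c j, p⟫) / (|⟪c j, y⟫| + 1) with hf
    have hfpos : ∀ j ∈ B, 0 < f j := by
      intro j hj
      rw [hB, Finset.mem_filter] at hj
      have h1 : 0 < -⟪c j, p⟫ := by linarith [hj.2]
      have h2 : (0:ℝ) < |⟪c j, y⟫| + 1 := by positivity
      exact div_pos h1 h2
    set ε : ℝ := if hBne : B.Nonempty then min 1 (B.inf' hBne f) else 1 with hε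
    have hεpos : 0 < ε := by
      rw [hε]; split
      · next hne => exact lt_min one_pos ((Finset.lt_inf'_iff hne).2 fun j hj => hfpos j hj)
      · exact one_pos
    have hεle : ∀ j ∈ B, ε ≤ f j := by
      intro j hj
      rw [hε]; split
      · exact le_trans (min_le_right _ _) (Finset.inf'_le f hj)
      · next hne => exact absurd ⟨j, hj⟩ hne
    have hmem : p + ε • y ∈ P := by
      intro j
      show ⟪c j, p + ε • y⟫ ≤ 0
      rw [inner_add_right, real_inner_smul_right]
      by_cases hjB : j ∈ B
      · have h1 : ε * ⟪c j, y⟫ ≤ ε * |⟪c j, y⟫| :=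
          mul_le_mul_of_nonneg_left (le_abs_self _) (le_of_lt hεpos)
        have h2 : ε * |⟪c j, y⟫| ≤ ε * (|⟪c j, y⟫| + 1) :=
          mul_le_mul_of_nonneg_left (by linarith) (le_of_lt hεpos)
        have h3 : ε * (|⟪c j, y⟫| + 1) ≤ f j * (|⟪c j, y⟫| + 1) :=
          mul_le_mul_of_nonneg_right (hεle j hjB) (by positivity)
        have h4 : f j * (|⟪c j, y⟫| + 1) = -⟪c j, p⟫ := by
          rw [hf]
          exact div_mul_cancel₀ _ (by positivity)
        linarith
      · have hjA : j ∈ A := by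
          have hle : ⟪c j, p⟫ ≤ 0 := hpP j
          rw [hB, Finset.mem_filter] at hjB
          push_neg at hjB
          exact Finset.mem_filter.2
            ⟨Finset.mem_univ j, le_antisymm hle (hjB (Finset.mem_univ j))⟩
        have h1 : ⟪c j, p⟫ = 0 := (Finset.mem_filter.1 hjA).2
        have h2 : ⟪c j, y⟫ ≤ 0 := hy ⟨j, hjA⟩
        nlinarith
    have hv := hvar (p + ε • y) hmem
    rw [add_sub_cancel_left, real_inner_smul_right] at hv
    nlinarith
  obtain ⟨l, hl0, hlsum⟩ := cone_farkas (fun j : ↥A => c j) (x - p) hnormal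
  set lE : Sum (Fin n) (Fin m) → ℝ := fun j => if h : j ∈ A then l ⟨j, h⟩ else 0 with hlE
  have hlE0 : ∀ j, 0 ≤ lE j := by
    intro j
    rw [hlE]; dsimp only
    split
    · exact hl0 _
    · exact le_rfl
  have hlEsum : ∑ j, lE j • c j = x - p := by
    rw [hlsum]
    calc ∑ j, lE j • c j = ∑ j ∈ A, lE j • c j :=
          (Finset.sum_subset (Finset.subset_univ A)
            (fun j _ hj => by rw [hlE]; dsimp only; rw [dif_neg hj, zero_smul])).symm
      _ = ∑ j : ↥A, lE (j : Sum (Fin n) (Fin m)) • c (j : Sum (Fin n) (Fin m)) :=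
          (Finset.sum_coe_sort A _).symm
      _ = ∑ j : ↥A, l j • c (j : Sum (Fin n) (Fin m)) :=
          Finset.sum_congr rfl fun j _ => by rw [hlE]; dsimp only; rw [dif_pos j.2]
  obtain ⟨l', hl'0, hl'supp, hl'sum, hl'bd⟩ := hrep lE hlE0
  have hxp : ∑ j, l' j • c j = x - p := by rw [hl'sum, hlEsum]
  have hl'A : ∀ j, l' j ≠ 0 → j ∈ A := by
    intro j hj
    have hne := hl'supp j hj
    by_contra hjA
    rw [hlE] at hne; dsimp only at hne; rw [dif_neg hjA] at hne
    exact hne rfl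
  have hbd : ∑ j, l' j ≤ M * ‖x - p‖ := by
    rw [← hlEsum]
    exact hl'bd
  have hkey : ‖x - p‖ ^ 2 ≤ (∑ j, l' j) * (N * δ) := by
    have h1 : (‖x - p‖ : ℝ) ^ 2 = ⟪x - p, x - p⟫ := (real_inner_self_eq_norm_sq _).symm
    rw [h1]
    nth_rewrite 1 [← hxp]
    rw [sum_inner]
    have hterm : ∀ j ∈ Finset.univ, ⟪l' j • c j, x - p⟫ ≤ l' j * (N * δ) := by
      intro j _
      rw [real_inner_smul_left]
      rcases eq_or_ne (l' j) 0 with h0 | h0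
      · simp [h0]
      · have hjA := hl'A j h0
        have hcp : ⟪c j, p⟫ = 0 := (Finset.mem_filter.1 hjA).2
        have h3 : ⟪c j, x - p⟫ = ⟪c j, x⟫ := by rw [inner_sub_right, hcp, sub_zero]
        rw [h3]
        have h4 : ⟪c j, x⟫ ≤ N * δ := by
          cases j with
          | inl i =>
            calc ⟪c (Sum.inl i), x⟫ = ⟪u i, x⟫ := rfl
              _ ≤ ‖u i‖ * δ := hinY i
              _ ≤ N * δ := mul_le_mul_of_nonneg_right (hNge i) hδnn
          | inr k =>
            calc ⟪c (Sum.inr k), x⟫ = ⟪w k, x⟫ := rfl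
              _ ≤ 0 := hxV k
              _ ≤ N * δ := mul_nonneg (le_of_lt hNpos) hδnn
        exact mul_le_mul_of_nonneg_left h4 (hl'0 j)
    calc ∑ j, ⟪l' j • c j, x - p⟫ ≤ ∑ j, l' j * (N * δ) := Finset.sum_le_sum hterm
      _ = (∑ j, l' j) * (N * δ) := (Finset.sum_mul _ _ _).symm
  rw [hdistP]
  have hNδ : 0 ≤ N * δ := mul_nonneg (le_of_lt hNpos) hδnn
  rcases eq_or_lt_of_le (norm_nonneg (x - p)) with h0 | h0
  · rw [← h0]
    exact mul_nonneg (mul_nonneg (le_of_lt hM) (le_of_lt hNpos)) hδnn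
  · have h5 : (∑ j, l' j) * (N * δ) ≤ (M * ‖x - p‖) * (N * δ) :=
      mul_le_mul_of_nonneg_right hbd hNδ
    have h6 : ‖x - p‖ ^ 2 ≤ (M * ‖x - p‖) * (N * δ) := le_trans hkey h5
    nlinarith
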